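/- arXiv:2012.13053 — 6 statements merged into one kernel-verified Lean document; each statement's English description precedes it below -/
import Mathlib

section
/- For every integer b ≥ 1 and every real β ≥ 0, the normalized truncated mean of a Poisson random variable with parameter bβ satisfies the identity (1/b)·( Σ_{k=0}^{b} k·e^{−bβ}(bβ)^k/k! + b·Σ_{k=b+1}^{∞} e^{−bβ}(bβ)^k/k! ) = 1 − e^{−bβ}(bβ)^b/b! − e^{−bβ}(1−β)·Σ_{k=0}^{b−1} (bβ)^k/k!. -/
/-!
Write `p_k = e^{-L} L^k / k!` with `L = bβ`. The weights `p_k` sum to `1`, so the tail beyond `b`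
is `1 - Σ_{k ≤ b} p_k`, and `k p_k = L p_{k-1}` turns the truncated first moment into
`L Σ_{k < b} p_k`. Dividing by `b` and using `L / b = β` leaves the right-hand side.
-/

open Finset Nat Real

noncomputable section

def poissonWeight (L : ℝ) (k : ℕ) : ℝ := exp (-L) * L ^ k / k !

theorem hasSum_poissonWeight (L : ℝ) : HasSum (poissonWeight L) 1 := by
  convert! (NormedSpace.expSeries_div_hasSum_exp L).mul_left (exp (-L)) using 1
  · ext k
    exact mul_div_assoc _ _ _
  · rw [← exp_eq_exp_ℝ, ← exp_add, neg_add_cancel, exp_zero]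

theorem tsum_poissonWeight_nat_add (L : ℝ) (n : ℕ) :
    ∑' k, poissonWeight L (k + n) = 1 - ∑ k ∈ range n, poissonWeight L k :=
  ((hasSum_nat_add_iff' n).mpr (hasSum_poissonWeight L)).tsum_eq

theorem succ_mul_poissonWeight_succ (L : ℝ) (k : ℕ) :
    ((k + 1 : ℕ) : ℝ) * poissonWeight L (k + 1) = L * poissonWeight L k := by
  simp only [poissonWeight, factorial_succ, cast_mul, pow_succ]
  field_simp

theorem sum_range_succ_mul_poissonWeight (L : ℝ) (n : ℕ) :
    ∑ k ∈ range (n + 1), (k : ℝ) * poissonWeight L k = L * ∑ k ∈ range n, poissonWeight L k := by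
  rw [sum_range_succ', mul_sum]
  simp only [succ_mul_poissonWeight_succ, CharP.cast_eq_zero, zero_mul, add_zero]

end

theorem poisson_truncated_mean_identity_general (b : ℕ) (hb : 1 ≤ b) (β : ℝ) :
    (1 / (b : ℝ)) *
      ((∑ k ∈ Finset.range (b + 1),
          (k : ℝ) * (Real.exp (-((b : ℝ) * β)) * ((b : ℝ) * β) ^ k / (Nat.factorial k))) +
        (b : ℝ) *
          (∑' k : ℕ,
            Real.exp (-((b : ℝ) * β)) * ((b : ℝ) * β) ^ (k + b + 1) /
              (Nat.factorial (k + b + 1)))) =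
    1 - Real.exp (-((b : ℝ) * β)) * ((b : ℝ) * β) ^ b / (Nat.factorial b) -
      Real.exp (-((b : ℝ) * β)) * (1 - β) *
        ∑ k ∈ Finset.range b, ((b : ℝ) * β) ^ k / (Nat.factorial k) := by
  have hb0 : (b : ℝ) ≠ 0 := Nat.cast_ne_zero.2 (by omega)
  set L := (b : ℝ) * β
  have hlower : exp (-L) * (1 - β) * ∑ k ∈ range b, L ^ k / k ! =
      (1 - β) * ∑ k ∈ range b, poissonWeight L k := by
    simp only [mul_sum, poissonWeight]
    exact sum_congr rfl fun k _ => by ring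
  change (1 / (b : ℝ)) * (∑ k ∈ range (b + 1), (k : ℝ) * poissonWeight L k +
      b * ∑' k, poissonWeight L (k + (b + 1))) = 1 - poissonWeight L b - _
  rw [hlower, sum_range_succ_mul_poissonWeight, tsum_poissonWeight_nat_add, sum_range_succ]
  field_simp
  ring

/-- For every integer `b ≥ 1` and every real `β ≥ 0`, the normalized truncated mean of a
Poisson random variable with parameter `bβ` satisfies
`(1/b)·( Σ_{k=0}^{b} k·e^{−bβ}(bβ)^k/k! + b·Σ_{k=b+1}^{∞} e^{−bβ}(bβ)^k/k! )
  = 1 − e^{−bβ}(bβ)^b/b! − e^{−bβ}(1−β)·Σ_{k=0}^{b−1} (bβ)^k/k!`. -/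
theorem poisson_truncated_mean_identity (b : ℕ) (hb : 1 ≤ b) (β : ℝ) (hβ : 0 ≤ β) :
    (1 / (b : ℝ)) *
      ((∑ k ∈ Finset.range (b + 1),
          (k : ℝ) * (Real.exp (-((b : ℝ) * β)) * ((b : ℝ) * β) ^ k / (Nat.factorial k))) +
        (b : ℝ) *
          (∑' k : ℕ,
            Real.exp (-((b : ℝ) * β)) * ((b : ℝ) * β) ^ (k + b + 1) /
              (Nat.factorial (k + b + 1)))) =
    1 - Real.exp (-((b : ℝ) * β)) * ((b : ℝ) * β) ^ b / (Nat.factorial b) -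
      Real.exp (-((b : ℝ) * β)) * (1 - β) *
        ∑ k ∈ Finset.range b, ((b : ℝ) * β) ^ k / (Nat.factorial k) :=
  poisson_truncated_mean_identity_general b hb β
end

section
/- For every integer b ≥ 1 and every real β with 0 ≤ β ≤ 1, defining α(β,b) := 1 − e^{−bβ}(bβ)^b/b! − e^{−bβ}(1−β)·Σ_{k=0}^{b−1}(bβ)^k/k!, one has the upper bound α(β,b) ≤ β + (1 − β − e^{−bβ})·(bβ)^b/b!. -/
/-- The fraction of balls removed per round when bin loads are Poisson with parameter `bβ`:
`α(β,b) := 1 − e^{−bβ}(bβ)^b/b! − e^{−bβ}(1−β)·Σ_{k=0}^{b−1}(bβ)^k/k!`. -/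
noncomputable def alphaFn (β : ℝ) (b : ℕ) : ℝ :=
  1 - Real.exp (-((b : ℝ) * β)) * ((b : ℝ) * β) ^ b / (Nat.factorial b) -
    Real.exp (-((b : ℝ) * β)) * (1 - β) *
      ∑ k ∈ Finset.range b, ((b : ℝ) * β) ^ k / (Nat.factorial k)

/-!
With `x = bβ` and `S = Σ_{k<b} x^k/k!`, the difference between the bound and `α(β,b)` is
`(1 - β)·(x^b/b! - (1 - e^{-x} S))`, and `1 - e^{-x} S` is the Poisson tail `P(Poi(x) ≥ b)`.
Since `(b+k)! ≥ b!·k!`, the tail series `Σ_k x^{b+k}/(b+k)!` of `e^x` is at most `x^b/b!·e^x`,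
so the Poisson tail is at most `x^b/b!`.
-/

open Nat Finset

theorem Real.exp_sub_sum_range_le {x : ℝ} (hx : 0 ≤ x) (n : ℕ) :
    Real.exp x - ∑ k ∈ range n, x ^ k / k ! ≤ x ^ n / n ! * Real.exp x := by
  have hexp : HasSum (fun k => x ^ k / k !) (Real.exp x) := by
    rw [Real.exp_eq_exp_ℝ]
    exact NormedSpace.expSeries_div_hasSum_exp x
  refine hasSum_le (fun k => ?_) ((hasSum_nat_add_iff' n).mpr hexp) (hexp.mul_left _)
  have hfac : (n ! * k ! : ℝ) ≤ (k + n)! := by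
    exact_mod_cast Nat.le_of_dvd (factorial_pos _)
      (add_comm n k ▸ factorial_mul_factorial_dvd_factorial_add n k)
  calc x ^ (k + n) / (k + n)! ≤ x ^ (k + n) / (n ! * k !) := by gcongr
    _ = x ^ n / n ! * (x ^ k / k !) := by rw [pow_add]; ring

theorem one_sub_exp_neg_mul_sum_range_le {x : ℝ} (hx : 0 ≤ x) (n : ℕ) :
    1 - Real.exp (-x) * ∑ k ∈ range n, x ^ k / k ! ≤ x ^ n / n ! := by
  have h := mul_le_mul_of_nonneg_left (Real.exp_sub_sum_range_le hx n) (Real.exp_pos (-x)).le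
  rwa [mul_sub, ← Real.exp_add, neg_add_cancel, Real.exp_zero, mul_left_comm, ← Real.exp_add,
    neg_add_cancel, Real.exp_zero, mul_one] at h

theorem alphaFn_upper_bound_general (b : ℕ) (β : ℝ) (hβ0 : 0 ≤ β) (hβ1 : β ≤ 1) :
    alphaFn β b ≤
      β + (1 - β - Real.exp (-((b : ℝ) * β))) * ((b : ℝ) * β) ^ b / (Nat.factorial b) := by
  set x : ℝ := b * β
  set S : ℝ := ∑ k ∈ range b, x ^ k / (k !)
  have htail : 1 - Real.exp (-x) * S ≤ x ^ b / b ! :=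
    one_sub_exp_neg_mul_sum_range_le (by positivity) b
  have hgap : β + (1 - β - Real.exp (-x)) * x ^ b / (b !) - alphaFn β b
      = (1 - β) * (x ^ b / (b !) - (1 - Real.exp (-x) * S)) := by
    unfold alphaFn; ring
  have := mul_nonneg (sub_nonneg.mpr hβ1) (sub_nonneg.mpr htail)
  linarith

/-- For every integer `b ≥ 1` and every real `β` with `0 ≤ β ≤ 1`, one has the upper bound
`α(β,b) ≤ β + (1 − β − e^{−bβ})·(bβ)^b/b!`. -/
theorem alphaFn_upper_bound (b : ℕ) (hb : 1 ≤ b) (β : ℝ) (hβ0 : 0 ≤ β) (hβ1 : β ≤ 1) :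
    alphaFn β b ≤
      β + (1 - β - Real.exp (-((b : ℝ) * β))) * ((b : ℝ) * β) ^ b / (Nat.factorial b) :=
  alphaFn_upper_bound_general b β hβ0 hβ1
end

section
/- For every real λ ≥ 0 and every integer m ≥ 1, the expected excess of a Poisson random variable with parameter λ above the level m satisfies Σ_{i=m+1}^{∞} (i − m) · e^{−λ} λ^i / i! = (λ^{m+1}/(m−1)!) · ∫_0^1 t (1−t)^{m−1} e^{λ(t−1)} dt. -/
/-!
Write `e^{λ(t-1)} = e^{-λ} ∑ₖ λ^k t^k / k!` and integrate term by term against `t (1-t)^{m-1}`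
(the terms are dominated by `|λ|^k / k!` on `[0, 1]`). The Beta integral
`∫₀¹ t^{k+1} (1-t)^{m-1} dt = (k+1)! (m-1)! / (k+m+1)!` turns the `k`-th term of the right-hand
side into `(k+1) e^{-λ} λ^{k+m+1} / (k+m+1)!`, the term `i = k + m + 1` of the expected excess.
-/

open MeasureTheory Real Nat

theorem integral_pow_mul_one_sub_pow (a b : ℕ) :
    ∫ x in (0 : ℝ)..1, x ^ a * (1 - x) ^ b = (a ! * b ! : ℝ) / (a + b + 1)! := by
  induction b generalizing a with
  | zero =>
    simp only [pow_zero, mul_one, integral_pow, factorial_zero, add_zero, factorial_succ]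
    push_cast
    field_simp
    simp
  | succ b ih =>
    have hsplit : (fun x : ℝ => x ^ a * (1 - x) ^ (b + 1)) =
        fun x => x ^ a * (1 - x) ^ b - x ^ (a + 1) * (1 - x) ^ b := by
      funext x; ring
    rw [hsplit, intervalIntegral.integral_sub (Continuous.intervalIntegrable (by fun_prop) _ _)
      (Continuous.intervalIntegrable (by fun_prop) _ _), ih, ih,
      show a + 1 + b + 1 = a + b + 1 + 1 by ring, show a + (b + 1) + 1 = a + b + 1 + 1 by ring,
      factorial_succ (a + b + 1), factorial_succ a, factorial_succ b]
    push_cast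
    field_simp
    ring

theorem hasSum_intervalIntegral_exp_mul {f : ℝ → ℝ} (hf : IntervalIntegrable f volume 0 1)
    (c : ℝ) :
    HasSum (fun k : ℕ => c ^ k / k ! * ∫ t in (0 : ℝ)..1, t ^ k * f t)
      (∫ t in (0 : ℝ)..1, exp (c * t) * f t) := by
  simp only [← intervalIntegral.integral_const_mul]
  refine intervalIntegral.hasSum_integral_of_dominated_convergence
    (fun k t => |c| ^ k / k ! * |f t|) (fun k => ?_) (fun k => ?_) ?_ ?_ ?_
  · exact ((continuous_pow k).aestronglyMeasurable.mul
      (intervalIntegrable_iff.mp hf).aestronglyMeasurable).const_mul _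
  · refine ae_of_all _ fun t ht => ?_
    rw [Set.uIoc_of_le zero_le_one] at ht
    have ht1 : |t| ≤ 1 := abs_le.mpr ⟨by linarith [ht.1], ht.2⟩
    simp only [norm_mul, norm_div, norm_pow, Real.norm_eq_abs, Nat.abs_cast]
    gcongr
    exact mul_le_of_le_one_left (abs_nonneg _) (pow_le_one₀ (abs_nonneg t) ht1)
  · exact ae_of_all _ fun t _ => (Real.summable_pow_div_factorial |c|).mul_right _
  · simp only [tsum_mul_right]
    exact hf.abs.const_mul _
  · refine ae_of_all _ fun t _ => ?_
    have hexp : HasSum (fun k : ℕ => (c * t) ^ k / k !) (exp (c * t)) := by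
      rw [exp_eq_exp_ℝ]; exact NormedSpace.expSeries_div_hasSum_exp (c * t)
    exact (hexp.mul_right (f t)).congr_fun fun k => by rw [mul_pow]; ring

theorem poisson_expected_excess_integral_general (l : ℝ) (m : ℕ) (hm : 1 ≤ m) :
    (∑' i : ℕ, (((i + m + 1 : ℕ) : ℝ) - (m : ℝ)) * (Real.exp (-l) * l ^ (i + m + 1) /
        (Nat.factorial (i + m + 1)))) =
      (l ^ (m + 1) / (Nat.factorial (m - 1))) *
        ∫ t in (0 : ℝ)..1, t * (1 - t) ^ (m - 1) * Real.exp (l * (t - 1)) := by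
  set f : ℝ → ℝ := fun t => t * (1 - t) ^ (m - 1)
  have hbeta (k : ℕ) :
      ∫ t in (0 : ℝ)..1, t ^ k * f t = ((k + 1)! * (m - 1)! : ℝ) / (k + m + 1)! := by
    simp only [f, ← mul_assoc, ← pow_succ]
    rw [integral_pow_mul_one_sub_pow, show k + 1 + (m - 1) + 1 = k + m + 1 by omega]
  have hexcess := (hasSum_intervalIntegral_exp_mul (f := f)
    (Continuous.intervalIntegrable (by fun_prop) _ _) l).mul_left
      (l ^ (m + 1) / (m - 1)! * exp (-l))
  have hintegrand (t : ℝ) :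
      t * (1 - t) ^ (m - 1) * exp (l * (t - 1)) = exp (-l) * (exp (l * t) * f t) := by
    rw [show l * (t - 1) = -l + l * t by ring, exp_add]; ring
  simp only [hintegrand]
  rw [intervalIntegral.integral_const_mul, ← mul_assoc]
  refine (hexcess.congr_fun fun k => ?_).tsum_eq
  rw [hbeta, factorial_succ k, show k + m + 1 = k + (m + 1) by ring, pow_add]
  push_cast
  field_simp
  ring

/-- For every real `λ ≥ 0` and every integer `m ≥ 1`, the expected excess of a Poisson
random variable with parameter `λ` above the level `m` satisfies
`Σ_{i=m+1}^{∞} (i − m)·e^{−λ} λ^i / i! = (λ^{m+1}/(m−1)!) · ∫_0^1 t(1−t)^{m−1} e^{λ(t−1)} dt`. -/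
theorem poisson_expected_excess_integral (l : ℝ) (hl : 0 ≤ l) (m : ℕ) (hm : 1 ≤ m) :
    (∑' i : ℕ, (((i + m + 1 : ℕ) : ℝ) - (m : ℝ)) * (Real.exp (-l) * l ^ (i + m + 1) /
        (Nat.factorial (i + m + 1)))) =
      (l ^ (m + 1) / (Nat.factorial (m - 1))) *
        ∫ t in (0 : ℝ)..1, t * (1 - t) ^ (m - 1) * Real.exp (l * (t - 1)) :=
  poisson_expected_excess_integral_general l m hm
end

section
/- For every real α with 0 < α < 1 and all integers b ≥ 1 and ℓ ≥ 1, one has ((ℓαb)^{ℓb}/(ℓb−1)!) · ∫_0^1 t (1−t)^{ℓb−1} e^{ℓαb(t−1)} dt ≤ (α^b e^{(1−α)b})^{ℓ}; that is, the ℓ-th term of the queue waiting-time series is dominated by the ℓ-th power of α^b e^{(1−α)b}. -/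
/-!
Write `n = ℓb` and `x = αn`. Since `e^{x(t-1)} = e^{-x} e^{xt} ≤ e^{-x} e^{nt}` on `[0, 1]`, and
`t (1-t)^{n-1} e^{nt}` has the antiderivative `-(1-t)^n e^{nt} / n`, the integral is at most
`e^{-x} / n`. The term is therefore at most `x^n e^{-x} / n! = α^n e^{-αn} · n^n / n!`, and
`n^n / n! ≤ e^n` is one term of the exponential series.
-/

open Real intervalIntegral

lemma hasDerivAt_neg_one_sub_pow_succ_mul_exp_div (m : ℕ) (t : ℝ) :
    HasDerivAt (fun t => -((1 - t) ^ (m + 1) * exp ((m + 1) * t)) / (m + 1))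
      (t * (1 - t) ^ m * exp ((m + 1) * t)) t := by
  have hpow : HasDerivAt (fun t : ℝ => (1 - t) ^ (m + 1)) ((m + 1 : ℕ) * (1 - t) ^ m * (-1)) t := by
    simpa using ((hasDerivAt_id t).const_sub 1).fun_pow (m + 1)
  have hexp : HasDerivAt (fun t : ℝ => exp ((m + 1) * t)) (exp ((m + 1) * t) * (m + 1)) t := by
    simpa using ((hasDerivAt_id t).const_mul ((m : ℝ) + 1)).exp
  refine ((hpow.fun_mul hexp).fun_neg.div_const _).congr_deriv ?_
  push_cast
  field_simp
  ring

lemma integral_mul_one_sub_pow_mul_exp (m : ℕ) :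
    ∫ t in (0 : ℝ)..1, t * (1 - t) ^ m * exp ((m + 1) * t) = 1 / (m + 1) := by
  rw [integral_eq_sub_of_hasDerivAt (fun t _ => hasDerivAt_neg_one_sub_pow_succ_mul_exp_div m t)
    ((by fun_prop : Continuous _).intervalIntegrable _ _)]
  simp [neg_div]

lemma integral_mul_one_sub_pow_mul_exp_le (m : ℕ) {x : ℝ} (hx : x ≤ m + 1) :
    ∫ t in (0 : ℝ)..1, t * (1 - t) ^ m * exp (x * (t - 1)) ≤ exp (-x) / (m + 1) := by
  have hle : ∀ t ∈ Set.Icc (0 : ℝ) 1,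
      t * (1 - t) ^ m * exp (x * (t - 1)) ≤ exp (-x) * (t * (1 - t) ^ m * exp ((m + 1) * t)) := by
    rintro t ⟨ht0, ht1⟩
    have hexp : exp (x * t) ≤ exp ((m + 1) * t) := exp_le_exp.2 (mul_le_mul_of_nonneg_right hx ht0)
    have hpoly : 0 ≤ t * (1 - t) ^ m := mul_nonneg ht0 (pow_nonneg (by linarith) m)
    calc t * (1 - t) ^ m * exp (x * (t - 1)) = exp (-x) * (t * (1 - t) ^ m * exp (x * t)) := by
          rw [show x * (t - 1) = -x + x * t by ring, exp_add]; ring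
      _ ≤ exp (-x) * (t * (1 - t) ^ m * exp ((m + 1) * t)) := by gcongr
  calc ∫ t in (0 : ℝ)..1, t * (1 - t) ^ m * exp (x * (t - 1))
      ≤ ∫ t in (0 : ℝ)..1, exp (-x) * (t * (1 - t) ^ m * exp ((m + 1) * t)) :=
        integral_mono_on zero_le_one ((by fun_prop : Continuous _).intervalIntegrable _ _)
          ((by fun_prop : Continuous _).intervalIntegrable _ _) hle
    _ = exp (-x) / (m + 1) := by
        rw [integral_const_mul, integral_mul_one_sub_pow_mul_exp, mul_one_div]

lemma pow_mul_exp_neg_div_factorial_le (n : ℕ) {α : ℝ} (hα : 0 ≤ α) :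
    (α * n) ^ n * exp (-(α * n)) / n.factorial ≤ α ^ n * exp ((1 - α) * n) := by
  have hn : (n : ℝ) ^ n / n.factorial ≤ exp n := pow_div_factorial_le_exp _ n.cast_nonneg n
  calc (α * n) ^ n * exp (-(α * n)) / n.factorial
      = α ^ n * exp (-(α * n)) * ((n : ℝ) ^ n / n.factorial) := by ring
    _ ≤ α ^ n * exp (-(α * n)) * exp n := by gcongr
    _ = α ^ n * exp ((1 - α) * n) := by rw [mul_assoc, ← exp_add]; ring_nf

lemma waiting_time_term_le (m : ℕ) {α : ℝ} (hα0 : 0 ≤ α) (hα1 : α ≤ 1) :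
    (α * (m + 1)) ^ (m + 1) / m.factorial *
        ∫ t in (0 : ℝ)..1, t * (1 - t) ^ m * exp (α * (m + 1) * (t - 1)) ≤
      α ^ (m + 1) * exp ((1 - α) * (m + 1)) := by
  have hx : α * (m + 1) ≤ m + 1 := mul_le_of_le_one_left (by positivity) hα1
  calc (α * (m + 1)) ^ (m + 1) / m.factorial *
        ∫ t in (0 : ℝ)..1, t * (1 - t) ^ m * exp (α * (m + 1) * (t - 1))
      ≤ (α * (m + 1)) ^ (m + 1) / m.factorial * (exp (-(α * (m + 1))) / (m + 1)) := by
        gcongr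
        exact integral_mul_one_sub_pow_mul_exp_le m hx
    _ = (α * (m + 1 : ℕ)) ^ (m + 1) * exp (-(α * (m + 1 : ℕ))) / (m + 1).factorial := by
        rw [Nat.factorial_succ]; push_cast; field_simp
    _ ≤ α ^ (m + 1) * exp ((1 - α) * (m + 1)) := by
        simpa using pow_mul_exp_neg_div_factorial_le (m + 1) hα0

/-- For every real `α` with `0 < α < 1` and all integers `b ≥ 1` and `ℓ ≥ 1`, one has
`((ℓαb)^{ℓb}/(ℓb−1)!) · ∫_0^1 t (1−t)^{ℓb−1} e^{ℓαb(t−1)} dt ≤ (α^b e^{(1−α)b})^ℓ`: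
the `ℓ`-th term of the queue waiting-time series is dominated by the `ℓ`-th power of
`α^b e^{(1−α)b}`. -/
theorem queue_waiting_time_term_bound (α : ℝ) (hα0 : 0 < α) (hα1 : α < 1)
    (b l : ℕ) (hb : 1 ≤ b) (hl : 1 ≤ l) :
    ((l : ℝ) * α * (b : ℝ)) ^ (l * b) / (Nat.factorial (l * b - 1)) *
        ∫ t in (0 : ℝ)..1, t * (1 - t) ^ (l * b - 1) *
          Real.exp ((l : ℝ) * α * (b : ℝ) * (t - 1)) ≤
      (α ^ b * Real.exp ((1 - α) * (b : ℝ))) ^ l := by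
  obtain ⟨m, hm⟩ : ∃ m, l * b = m + 1 := Nat.exists_eq_add_one.2 (Nat.mul_pos hl hb)
  have hlb : (l : ℝ) * b = m + 1 := by exact_mod_cast hm
  have hrhs : (α ^ b * exp ((1 - α) * b)) ^ l = α ^ (m + 1) * exp ((1 - α) * (m + 1)) := by
    rw [mul_pow, ← pow_mul, ← exp_nat_mul, mul_comm b l, hm, ← hlb]
    ring_nf
  rw [hrhs, hm, Nat.add_sub_cancel, show (l : ℝ) * α * b = α * (m + 1) by rw [← hlb]; ring]
  exact waiting_time_term_le m hα0.le hα1.le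
end

section
/- Let d ≥ 2 be an integer and let s : ℕ → ℝ → ℝ be a family of functions such that s_0(t) = 1 for all t ≥ 0, s_i(0) = 0 and s_i(t) ≥ 0 for all i ≥ 1 and t ≥ 0, and for each i ≥ 1 the function s_i is differentiable on [0,∞) with derivative s_i′(t) = (s_{i−1}(t))^d − (s_i(t))^d. Then for all i ≥ 1 and all t ≥ 0, s_i(t) ≤ t^{(d^i − 1)/(d − 1)}. -/
/-!
Since `s (i+1)` vanishes at `0` and grows no faster than `s i ^ d`, an induction on `i` with
the comparison principle for derivatives gives `s i t ≤ t ^ (1 + d + ⋯ + d ^ (i-1))`: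
if `s i t ≤ t ^ n`, then `(s (i+1))' ≤ t ^ (d * n) ≤ (t ^ (d * n + 1))'`.
-/

open Set Finset

theorem le_of_hasDerivWithinAt_le_Ici {f g f' g' : ℝ → ℝ} {a : ℝ}
    (hf : ∀ x ∈ Ici a, HasDerivWithinAt f (f' x) (Ici a) x)
    (hg : ∀ x ∈ Ici a, HasDerivWithinAt g (g' x) (Ici a) x)
    (ha : f a ≤ g a) (hf'g' : ∀ x ∈ Ioi a, f' x ≤ g' x) :
    ∀ x ∈ Ici a, f x ≤ g x := by
  have hmono : MonotoneOn (g - f) (Ici a) := by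
    refine monotoneOn_of_hasDerivWithinAt_nonneg (f' := g' - f') (convex_Ici a)
      (fun x hx => ((hg x hx).sub (hf x hx)).continuousWithinAt) (fun x hx => ?_) (fun x hx => ?_)
    · rw [interior_Ici] at hx ⊢
      exact ((hg x (Ioi_subset_Ici_self hx)).sub (hf x (Ioi_subset_Ici_self hx))).mono
        Ioi_subset_Ici_self
    · rw [interior_Ici] at hx
      exact sub_nonneg.mpr (hf'g' x hx)
  intro x hx
  have := hmono self_mem_Ici hx hx
  simp only [Pi.sub_apply] at this
  linarith

theorem le_pow_mul_add_one_of_hasDerivWithinAt {f g : ℝ → ℝ} {d n : ℕ} (hf0 : f 0 = 0)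
    (hf : ∀ t : ℝ, 0 ≤ t → 0 ≤ f t) (hg : ∀ t : ℝ, 0 ≤ t → 0 ≤ g t)
    (hgn : ∀ t : ℝ, 0 ≤ t → g t ≤ t ^ n)
    (hderiv : ∀ t : ℝ, 0 ≤ t → HasDerivWithinAt f (g t ^ d - f t ^ d) (Ici 0) t) :
    ∀ t : ℝ, 0 ≤ t → f t ≤ t ^ (d * n + 1) := by
  refine fun t ht => le_of_hasDerivWithinAt_le_Ici (fun x hx => hderiv x hx)
    (fun x _ => (hasDerivAt_pow (d * n + 1) x).hasDerivWithinAt) (by simp [hf0]) (fun x hx => ?_) t ht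
  have hx : 0 ≤ x := le_of_lt hx
  calc g x ^ d - f x ^ d ≤ g x ^ d := sub_le_self _ (pow_nonneg (hf x hx) d)
    _ ≤ (x ^ n) ^ d := pow_le_pow_left₀ (hg x hx) (hgn x hx) d
    _ = 1 * x ^ (d * n) := by rw [← pow_mul, one_mul, mul_comm]
    _ ≤ ((d * n + 1 : ℕ) : ℝ) * x ^ (d * n + 1 - 1) := by
      rw [Nat.add_sub_cancel]
      gcongr
      exact_mod_cast Nat.le_add_left 1 (d * n)

/-- Fluid-limit analysis of hashing with `d ≥ 2` hash functions and greedy least-loaded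
assignment: if `s 0 ≡ 1` on `[0,∞)`, `s i 0 = 0` and `s i ≥ 0` for `i ≥ 1`, and each `s i`
(for `i ≥ 1`) is differentiable on `[0,∞)` with derivative `(s (i−1) t)^d − (s i t)^d`,
then `s i t ≤ t^{(d^i − 1)/(d − 1)}` for all `i ≥ 1` and `t ≥ 0`. -/
theorem fluid_limit_tail_bound (d : ℕ) (hd : 2 ≤ d) (s : ℕ → ℝ → ℝ)
    (hs0 : ∀ t : ℝ, 0 ≤ t → s 0 t = 1)
    (hinit : ∀ i : ℕ, 1 ≤ i → s i 0 = 0)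
    (hnonneg : ∀ i : ℕ, 1 ≤ i → ∀ t : ℝ, 0 ≤ t → 0 ≤ s i t)
    (hderiv : ∀ i : ℕ, 1 ≤ i → ∀ t : ℝ, 0 ≤ t →
      HasDerivWithinAt (s i) ((s (i - 1) t) ^ d - (s i t) ^ d) (Set.Ici 0) t) :
    ∀ i : ℕ, 1 ≤ i → ∀ t : ℝ, 0 ≤ t → s i t ≤ t ^ ((d ^ i - 1) / (d - 1)) := by
  have hnonneg' : ∀ i : ℕ, ∀ t : ℝ, 0 ≤ t → 0 ≤ s i t := by
    rintro (_ | i) t ht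
    · simp [hs0 t ht]
    · exact hnonneg (i + 1) (by omega) t ht
  have geom : ∀ i : ℕ, ∀ t : ℝ, 0 ≤ t → s i t ≤ t ^ ∑ j ∈ range i, d ^ j := by
    intro i
    induction i with
    | zero => intro t ht; simp [hs0 t ht]
    | succ i ih =>
      rw [geom_sum_succ]
      exact le_pow_mul_add_one_of_hasDerivWithinAt (hinit (i + 1) (by omega))
        (hnonneg' (i + 1)) (hnonneg' i) ih (hderiv (i + 1) (by omega))
  intro i _ t ht
  rw [← Nat.geomSum_eq hd i]
  exact geom i t ht
end

section
/- Let d ≥ 2 and b ≥ 1 be integers and let s : ℕ → ℝ → ℝ satisfy: s_0(t) = 1 for all t ≥ 0, s_i(0) = 0 and s_i(t) ≥ 0 for all i ≥ 1 and t ≥ 0, and for each i ≥ 1, s_i is differentiable on [0,∞) with s_i′(t) = (s_{i−1}(t))^d − (s_i(t))^d. Then for every real T with 0 ≤ T ≤ 1, ∫_0^T (s_b(t))^d dt ≤ T^{1 + d(d^b − 1)/(d − 1)} = T · T^{(d^b − 1)·(1 + 1/(d−1))}. -/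
/-!
Set `e i = ∑_{j<i} d^j`, so that `e 0 = 0` and `e (i+1) = d e i + 1`. By induction on `i`,
`s i t ≤ t ^ e i` for `t ≥ 0`: given the bound for `s i`, the derivative of `s (i+1)` is at most
`(s i t)^d ≤ t^(d e i)`, so `s (i+1) t ≤ t^(e (i+1)) / e (i+1) ≤ t^(e (i+1))`. Integrating
`(s b t)^d ≤ t^(d e b)` over `[0, T]` gives `T^(1 + d e b)`. Finally `d e b = d (d^b - 1)/(d - 1)`
for `d ≥ 2`, while for `d ≤ 1` the truncated ℕ-division makes the right side `0`; in every case
it is at most `d e b`, which suffices since `T ≤ 1`.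
-/

open Finset Set

theorem le_pow_succ_div_of_hasDerivWithinAt_le {f f' : ℝ → ℝ} {m : ℕ}
    (hf : ∀ x, 0 ≤ x → HasDerivWithinAt f (f' x) (Ici 0) x) (h0 : f 0 = 0)
    (hf' : ∀ x, 0 ≤ x → f' x ≤ x ^ m) {t : ℝ} (ht : 0 ≤ t) :
    f t ≤ t ^ (m + 1) / (m + 1) := by
  have hB : ∀ x : ℝ, HasDerivWithinAt (fun x : ℝ ↦ x ^ (m + 1) / (m + 1)) (x ^ m) (Ici x) x := by
    intro x
    refine ((hasDerivAt_pow (m + 1) x).div_const ((m : ℝ) + 1)).hasDerivWithinAt.congr_deriv ?_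
    rw [Nat.add_sub_cancel, Nat.cast_succ, mul_div_cancel_left₀ _ (by positivity)]
  refine image_le_of_deriv_right_le_deriv_boundary (f' := f') (B' := fun x ↦ x ^ m)
    (fun x hx ↦ (hf x hx.1).continuousWithinAt.mono Icc_subset_Ici_self)
    (fun x hx ↦ (hf x hx.1).mono (Ici_subset_Ici.2 hx.1)) (by simp [h0])
    (by fun_prop) (fun x _ ↦ hB x) (fun x hx ↦ hf' x hx.1) ⟨ht, le_rfl⟩

theorem Nat.mul_pow_sub_one_div_le_mul_geom_sum (d n : ℕ) :
    d * (d ^ n - 1) / (d - 1) ≤ d * ∑ i ∈ range n, d ^ i := by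
  refine Nat.div_le_of_le_mul ?_
  rcases Nat.eq_zero_or_pos d with rfl | hd
  · simp
  · rw [← geom_sum_mul_of_one_le hd]
    exact le_of_eq (by ring)

section FluidLimit

variable (d : ℕ) (s : ℕ → ℝ → ℝ)

theorem fluid_nonneg (hs0 : ∀ t : ℝ, 0 ≤ t → s 0 t = 1)
    (hnonneg : ∀ i : ℕ, 1 ≤ i → ∀ t : ℝ, 0 ≤ t → 0 ≤ s i t) (i : ℕ) {t : ℝ} (ht : 0 ≤ t) :
    0 ≤ s i t := by
  rcases i with _ | i
  · simp [hs0 t ht]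
  · exact hnonneg _ (by omega) t ht

theorem fluid_le_pow_geom_sum (hs0 : ∀ t : ℝ, 0 ≤ t → s 0 t = 1)
    (hinit : ∀ i : ℕ, 1 ≤ i → s i 0 = 0)
    (hnonneg : ∀ i : ℕ, 1 ≤ i → ∀ t : ℝ, 0 ≤ t → 0 ≤ s i t)
    (hderiv : ∀ i : ℕ, 1 ≤ i → ∀ t : ℝ, 0 ≤ t →
      HasDerivWithinAt (s i) ((s (i - 1) t) ^ d - (s i t) ^ d) (Set.Ici 0) t)
    (i : ℕ) {t : ℝ} (ht : 0 ≤ t) :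
    s i t ≤ t ^ ∑ j ∈ range i, d ^ j := by
  induction i generalizing t with
  | zero => simp [hs0 t ht]
  | succ i ih =>
    set e := ∑ j ∈ range i, d ^ j
    have hderiv_le : ∀ x, 0 ≤ x → s i x ^ d - s (i + 1) x ^ d ≤ x ^ (d * e) := fun x hx ↦
      calc s i x ^ d - s (i + 1) x ^ d
          ≤ s i x ^ d := sub_le_self _ (pow_nonneg (fluid_nonneg s hs0 hnonneg _ hx) d)
        _ ≤ (x ^ e) ^ d := pow_le_pow_left₀ (fluid_nonneg s hs0 hnonneg _ hx) (ih hx) d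
        _ = x ^ (d * e) := (pow_mul' x d e).symm
    have hbound := le_pow_succ_div_of_hasDerivWithinAt_le
      (fun x hx ↦ by simpa using hderiv (i + 1) (by omega) x hx) (hinit (i + 1) (by omega))
      hderiv_le ht
    rw [geom_sum_succ]
    push_cast at hbound
    exact hbound.trans (div_le_self (by positivity) (le_add_of_nonneg_left (by positivity)))

end FluidLimit

theorem fluid_limit_overflow_bound_general (d : ℕ) (b : ℕ)
    (s : ℕ → ℝ → ℝ)
    (hs0 : ∀ t : ℝ, 0 ≤ t → s 0 t = 1)
    (hinit : ∀ i : ℕ, 1 ≤ i → s i 0 = 0)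
    (hnonneg : ∀ i : ℕ, 1 ≤ i → ∀ t : ℝ, 0 ≤ t → 0 ≤ s i t)
    (hderiv : ∀ i : ℕ, 1 ≤ i → ∀ t : ℝ, 0 ≤ t →
      HasDerivWithinAt (s i) ((s (i - 1) t) ^ d - (s i t) ^ d) (Set.Ici 0) t)
    (T : ℝ) (hT0 : 0 ≤ T) (hT1 : T ≤ 1) :
    (∫ t in (0 : ℝ)..T, (s b t) ^ d) ≤ T ^ (1 + d * (d ^ b - 1) / (d - 1)) := by
  have hexp := Nat.mul_pow_sub_one_div_le_mul_geom_sum d b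
  set e := ∑ j ∈ range b, d ^ j
  have hpointwise : ∀ t ∈ Ioc 0 T, s b t ^ d ≤ t ^ (d * e) := fun t ht ↦ by
    rw [pow_mul']
    exact pow_le_pow_left₀ (fluid_nonneg s hs0 hnonneg b ht.1.le)
      (fluid_le_pow_geom_sum d s hs0 hinit hnonneg hderiv b ht.1.le) d
  calc ∫ t in (0 : ℝ)..T, s b t ^ d
      ≤ ∫ t in (0 : ℝ)..T, t ^ (d * e) := by
        rw [intervalIntegral.integral_of_le hT0, intervalIntegral.integral_of_le hT0]
        exact MeasureTheory.setIntegral_mono_of_nonneg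
          (fun t ht ↦ pow_nonneg (fluid_nonneg s hs0 hnonneg b ht.1.le) d) hpointwise
          (continuous_pow _).integrableOn_Ioc
    _ = T ^ (d * e + 1) / (d * e + 1) := by simp [integral_pow]
    _ ≤ T ^ (d * e + 1) := div_le_self (by positivity) (le_add_of_nonneg_left (by positivity))
    _ ≤ T ^ (1 + d * (d ^ b - 1) / (d - 1)) := pow_le_pow_of_le_one hT0 hT1 (by omega)

/-- Fluid-limit analysis of hashing with `d ≥ 2` hash functions: under the ODE system
`s i′ = (s (i−1))^d − (s i)^d` with `s 0 ≡ 1`, `s i 0 = 0` and `s i ≥ 0` for `i ≥ 1`,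
for every `b ≥ 1` and every `T` with `0 ≤ T ≤ 1`,
`∫_0^T (s b t)^d dt ≤ T^{1 + d(d^b − 1)/(d − 1)}`. -/
theorem fluid_limit_overflow_bound (d : ℕ) (hd : 2 ≤ d) (b : ℕ) (hb : 1 ≤ b)
    (s : ℕ → ℝ → ℝ)
    (hs0 : ∀ t : ℝ, 0 ≤ t → s 0 t = 1)
    (hinit : ∀ i : ℕ, 1 ≤ i → s i 0 = 0)
    (hnonneg : ∀ i : ℕ, 1 ≤ i → ∀ t : ℝ, 0 ≤ t → 0 ≤ s i t)
    (hderiv : ∀ i : ℕ, 1 ≤ i → ∀ t : ℝ, 0 ≤ t →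
      HasDerivWithinAt (s i) ((s (i - 1) t) ^ d - (s i t) ^ d) (Set.Ici 0) t)
    (T : ℝ) (hT0 : 0 ≤ T) (hT1 : T ≤ 1) :
    (∫ t in (0 : ℝ)..T, (s b t) ^ d) ≤ T ^ (1 + d * (d ^ b - 1) / (d - 1)) :=
  fluid_limit_overflow_bound_general d b s hs0 hinit hnonneg hderiv T hT0 hT1
end
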